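/- arXiv:2505.05080 — 4 statements merged into one kernel-verified Lean document; each statement's English description precedes it below -/
import Mathlib

section
/- Let X₁ and X₂ be independent random variables, where Xᵢ follows the gamma distribution with shape parameter αᵢ > 0 and rate parameter λ > 0 (the same rate for both). Then the proportion X₁/(X₁ + X₂) and the sum X₁ + X₂ are independent. -/
open MeasureTheory ProbabilityTheory

section BetaGammaAux

open Set Real
open scoped ENNReal


lemma aux_prod_withDensity {μ ν : Measure ℝ} [SFinite μ] [SFinite ν]
    {f g : ℝ → ℝ≥0∞} (hf : Measurable f) (hg : Measurable g) :
    (μ.withDensity f).prod (ν.withDensity g) =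
      (μ.prod ν).withDensity (fun p => f p.1 * g p.2) := by
  ext s hs
  have hk : Measurable fun p : ℝ × ℝ => f p.1 * g p.2 :=
    (hf.comp measurable_fst).mul (hg.comp measurable_snd)
  have h1 : ∀ x : ℝ, (ν.withDensity g) (Prod.mk x ⁻¹' s)
      = ∫⁻ y, s.indicator (fun p : ℝ × ℝ => g p.2) (x, y) ∂ν := by
    intro x
    rw [withDensity_apply _ (measurable_prodMk_left hs),
      ← lintegral_indicator (measurable_prodMk_left hs)]
    rfl
  rw [Measure.prod_apply hs, withDensity_apply _ hs]
  simp_rw [h1]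
  have hgs : Measurable (fun p : ℝ × ℝ => g p.2) := hg.comp measurable_snd
  rw [lintegral_withDensity_eq_lintegral_mul _ hf
    (Measurable.lintegral_prod_right' (hgs.indicator hs))]
  rw [← lintegral_indicator hs, lintegral_prod _ (hk.indicator hs).aemeasurable]
  congr 1
  ext x
  simp only [Pi.mul_apply]
  rw [← lintegral_const_mul (f x) (show Measurable fun y => s.indicator (fun p : ℝ × ℝ => g p.2) (x, y) from (hgs.indicator hs).comp measurable_prodMk_left)]
  congr 1
  ext y
  simp only [Set.indicator, Function.comp_apply]
  by_cases h : (x, y) ∈ s <;> simp [h]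

lemma aux_withDensity_map {α β : Type*} [MeasurableSpace α] [MeasurableSpace β]
    (μ : Measure α) {S : α → β} (hS : Measurable S) {h : β → ℝ≥0∞} (hh : Measurable h) :
    (μ.map S).withDensity h = (μ.withDensity fun x => h (S x)).map S := by
  ext t ht
  rw [withDensity_apply _ ht, Measure.map_apply hS ht,
    withDensity_apply _ (hS ht), setLIntegral_map ht hh hS]

/-- derivative of the inverse map `S (u,v) = (u*v, (1-u)*v)` -/
lemma aux_hasFDerivAt_S (p : ℝ × ℝ) :
    HasFDerivAt (fun q : ℝ × ℝ => (q.1 * q.2, (1 - q.1) * q.2))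
      (LinearMap.toContinuousLinearMap (Matrix.toLin (Module.Basis.finTwoProd ℝ) (Module.Basis.finTwoProd ℝ)
        !![p.2, p.1; -p.2, 1 - p.1])) p := by
  rw [Matrix.toLin_finTwoProd_toContinuousLinearMap]
  refine (HasFDerivAt.prodMk (𝕜 := ℝ)
    ((hasFDerivAt_fst (𝕜 := ℝ) (p := p)).fun_mul (hasFDerivAt_snd (𝕜 := ℝ) (p := p)))
    (((hasFDerivAt_const (1:ℝ) p).sub (hasFDerivAt_fst (𝕜 := ℝ) (p := p))).fun_mul (hasFDerivAt_snd (𝕜 := ℝ) (p := p)))).congr_fderiv ?_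
  ext <;> simp

lemma aux_measurable_gammaPDF (a r : ℝ) : Measurable (gammaPDF a r) :=
  ENNReal.measurable_ofReal.comp (measurable_gammaPDFReal a r)

/-- the real density identity behind the beta-gamma factorization -/
lemma aux_density_identity {α₁ α₂ lam u v : ℝ} (hα₁ : 0 < α₁) (hα₂ : 0 < α₂)
    (hlam : 0 < lam) (hu : 0 < u) (hu1 : u < 1) (hv : 0 < v) :
    v * ((lam ^ α₁ / Gamma α₁ * (u * v) ^ (α₁ - 1) * exp (-(lam * (u * v)))) *
        (lam ^ α₂ / Gamma α₂ * ((1 - u) * v) ^ (α₂ - 1) * exp (-(lam * ((1 - u) * v)))))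
      = (Gamma (α₁ + α₂) / (Gamma α₁ * Gamma α₂) * u ^ (α₁ - 1) * (1 - u) ^ (α₂ - 1)) *
        (lam ^ (α₁ + α₂) / Gamma (α₁ + α₂) * v ^ (α₁ + α₂ - 1) * exp (-(lam * v))) := by
  have h1u : (0:ℝ) < 1 - u := by linarith
  have h1 : (u * v) ^ (α₁ - 1) = u ^ (α₁ - 1) * v ^ (α₁ - 1) := mul_rpow hu.le hv.le
  have h2 : ((1 - u) * v) ^ (α₂ - 1) = (1 - u) ^ (α₂ - 1) * v ^ (α₂ - 1) :=
    mul_rpow h1u.le hv.le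
  have h3 : lam ^ (α₁ + α₂) = lam ^ α₁ * lam ^ α₂ := rpow_add hlam _ _
  have h4 : v ^ (α₁ + α₂ - 1) = v ^ (α₁ - 1) * v ^ (α₂ - 1) * v := by
    rw [show α₁ + α₂ - 1 = (α₁ - 1) + ((α₂ - 1) + 1) by ring, rpow_add hv, rpow_add hv,
      rpow_one, mul_assoc]
  have h5 : exp (-(lam * (u * v))) * exp (-(lam * ((1 - u) * v))) = exp (-(lam * v)) := by
    rw [← exp_add]; ring_nf
  have hΓ : Gamma (α₁ + α₂) ≠ 0 := (Gamma_pos_of_pos (by linarith)).ne'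
  have hΓ₁ : Gamma α₁ ≠ 0 := (Gamma_pos_of_pos hα₁).ne'
  have hΓ₂ : Gamma α₂ ≠ 0 := (Gamma_pos_of_pos hα₂).ne'
  rw [h1, h2, h3, h4, ← h5]
  field_simp

/-- the (unnormalized-looking, but actually normalized) beta density -/
noncomputable def auxBetaPDF (a b : ℝ) : ℝ → ℝ≥0∞ := fun u =>
  ENNReal.ofReal (Gamma (a + b) / (Gamma a * Gamma b) * u ^ (a - 1) * (1 - u) ^ (b - 1))

lemma aux_measurable_betaPDF (a b : ℝ) : Measurable (auxBetaPDF a b) := by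
  unfold auxBetaPDF
  exact ENNReal.measurable_ofReal.comp <|
    (((measurable_id.pow_const _).const_mul _).mul
      ((measurable_const.sub measurable_id).pow_const _))

lemma gamma_map_T {α₁ α₂ lam : ℝ} (hα₁ : 0 < α₁) (hα₂ : 0 < α₂) (hlam : 0 < lam) :
    Measure.map (fun p : ℝ × ℝ => (p.1 / (p.1 + p.2), p.1 + p.2))
        ((gammaMeasure α₁ lam).prod (gammaMeasure α₂ lam))
      = (volume.withDensity ((Ioo (0:ℝ) 1).indicator (auxBetaPDF α₁ α₂))).prod
          (gammaMeasure (α₁ + α₂) lam) := by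
  set T : ℝ × ℝ → ℝ × ℝ := fun p => (p.1 / (p.1 + p.2), p.1 + p.2) with hT
  set S : ℝ × ℝ → ℝ × ℝ := fun q => (q.1 * q.2, (1 - q.1) * q.2) with hS
  set R : Set (ℝ × ℝ) := Ioo (0:ℝ) 1 ×ˢ Ioi (0:ℝ) with hRdef
  set Q : Set (ℝ × ℝ) := Ioi (0:ℝ) ×ˢ Ioi (0:ℝ) with hQdef
  have hTm : Measurable T := (measurable_fst.div (measurable_fst.add measurable_snd)).prodMk
    (measurable_fst.add measurable_snd)
  have hSm : Measurable S := (measurable_fst.mul measurable_snd).prodMk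
    ((measurable_const.sub measurable_fst).mul measurable_snd)
  have hRm : MeasurableSet R := measurableSet_Ioo.prod measurableSet_Ioi
  have hQm : MeasurableSet Q := measurableSet_Ioi.prod measurableSet_Ioi
  -- the joint density
  set h : ℝ × ℝ → ℝ≥0∞ := fun p => gammaPDF α₁ lam p.1 * gammaPDF α₂ lam p.2 with hh
  have hhm : Measurable h := ((aux_measurable_gammaPDF α₁ lam).comp measurable_fst).mul
    ((aux_measurable_gammaPDF α₂ lam).comp measurable_snd)
  -- step 1 : joint law as density on ℝ²
  have step1 : (gammaMeasure α₁ lam).prod (gammaMeasure α₂ lam)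
      = (volume : Measure (ℝ × ℝ)).withDensity h := by
    rw [show gammaMeasure α₁ lam = volume.withDensity (gammaPDF α₁ lam) from rfl,
      show gammaMeasure α₂ lam = volume.withDensity (gammaPDF α₂ lam) from rfl,
      aux_prod_withDensity (aux_measurable_gammaPDF α₁ lam) (aux_measurable_gammaPDF α₂ lam),
      ← Measure.volume_eq_prod]
  -- step 2 : restrict to the open quadrant Q
  have hnull : (volume : Measure (ℝ × ℝ)) {p | p.1 = 0 ∨ p.2 = 0} = 0 := by
    have : {p : ℝ × ℝ | p.1 = 0 ∨ p.2 = 0}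
        = ({(0:ℝ)} ×ˢ (univ : Set ℝ)) ∪ ((univ : Set ℝ) ×ˢ ({(0:ℝ)})) := by
      ext ⟨x, y⟩; simp [Set.mem_prod, eq_comm]
    rw [this]
    refine measure_union_null ?_ ?_ <;>
      rw [Measure.volume_eq_prod, Measure.prod_prod] <;> simp
  have step2 : (volume : Measure (ℝ × ℝ)).withDensity h
      = ((volume : Measure (ℝ × ℝ)).restrict Q).withDensity h := by
    rw [← withDensity_indicator hQm]
    apply withDensity_congr_ae
    have hae : ∀ᵐ p : ℝ × ℝ ∂volume, p.1 ≠ 0 ∧ p.2 ≠ 0 := by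
      refine ae_iff.2 (measure_mono_null (fun p hp => ?_) hnull)
      simp only [mem_setOf_eq, not_and_or, not_not] at hp ⊢
      tauto
    filter_upwards [hae] with p hp
    by_cases hpQ : p ∈ Q
    · simp [Set.indicator, hpQ]
    · simp only [Set.indicator, if_neg hpQ]
      simp only [hQdef, Set.mem_prod, mem_Ioi, not_and_or, not_lt] at hpQ
      have : p.1 < 0 ∨ p.2 < 0 := by
        rcases hpQ with hc | hc
        · exact Or.inl (lt_of_le_of_ne hc hp.1)
        · exact Or.inr (lt_of_le_of_ne hc hp.2)
      rcases this with hc | hc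
      · simp [hh, gammaPDF_of_neg hc]
      · simp [hh, gammaPDF_of_neg hc]
  -- Jacobian
  set B : ℝ × ℝ → (ℝ × ℝ →L[ℝ] ℝ × ℝ) := fun p =>
    LinearMap.toContinuousLinearMap (Matrix.toLin (Module.Basis.finTwoProd ℝ) (Module.Basis.finTwoProd ℝ)
      !![p.2, p.1; -p.2, 1 - p.1]) with hB
  have hBdet : ∀ p : ℝ × ℝ, (B p).det = p.2 := by
    intro p
    simp only [hB, LinearMap.det_toContinuousLinearMap, LinearMap.det_toLin,
      Matrix.det_fin_two_of]
    ring
  have hdetm : Measurable fun p : ℝ × ℝ => ENNReal.ofReal |(B p).det| := by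
    have e : (fun p : ℝ × ℝ => ENNReal.ofReal |(B p).det|)
        = fun p : ℝ × ℝ => ENNReal.ofReal |p.2| := by
      funext p; rw [hBdet]
    rw [e]
    exact ENNReal.measurable_ofReal.comp (measurable_snd.abs)
  have hinj : InjOn S R := by
    rintro ⟨u₁, v₁⟩ ⟨hu₁, hv₁⟩ ⟨u₂, v₂⟩ ⟨hu₂, hv₂⟩ hSe
    simp only [hS, Prod.mk.injEq] at hSe
    obtain ⟨e1, e2⟩ := hSe
    have hv : v₁ = v₂ := by linear_combination e1 + e2
    subst hv
    have hv1 : v₁ ≠ 0 := ne_of_gt (mem_Ioi.mp hv₁)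
    have : u₁ = u₂ := mul_right_cancel₀ hv1 e1
    simp [this]
  have himg : S '' R = Q := by
    ext q
    constructor
    · rintro ⟨⟨u, v⟩, ⟨hu, hv⟩, rfl⟩
      simp only [mem_Ioo] at hu
      have hv' : (0:ℝ) < v := hv
      exact ⟨mul_pos hu.1 hv', mul_pos (by linarith [hu.2]) hv'⟩
    · rintro ⟨hx, hy⟩
      have hx' : (0:ℝ) < q.1 := hx
      have hy' : (0:ℝ) < q.2 := hy
      have hxy : (0:ℝ) < q.1 + q.2 := by linarith
      refine ⟨(q.1 / (q.1 + q.2), q.1 + q.2), ⟨⟨div_pos hx' hxy, ?_⟩, hxy⟩, ?_⟩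
      · rw [div_lt_one hxy]; linarith
      · have e1 : q.1 / (q.1 + q.2) * (q.1 + q.2) = q.1 := div_mul_cancel₀ q.1 hxy.ne'
        have e2 : (1 - q.1 / (q.1 + q.2)) * (q.1 + q.2) = q.2 := by field_simp; ring
        simp only [hS]
        rw [e1, e2]
  have key : Measure.map S (((volume : Measure (ℝ × ℝ)).restrict R).withDensity
      fun p => ENNReal.ofReal |(B p).det|) = (volume : Measure (ℝ × ℝ)).restrict Q := by
    rw [← himg]
    exact map_withDensity_abs_det_fderiv_eq_addHaar volume hRm.nullMeasurableSet
      (fun p _ => (aux_hasFDerivAt_S p).hasFDerivWithinAt) hinj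
  -- the pushed-forward density on R
  set k : ℝ × ℝ → ℝ≥0∞ := fun p => ENNReal.ofReal |(B p).det| * h (S p) with hk
  have hkm : Measurable k := hdetm.mul (hhm.comp hSm)
  set σ : Measure (ℝ × ℝ) := ((volume : Measure (ℝ × ℝ)).restrict R).withDensity k with hσ
  have e : (((volume : Measure (ℝ × ℝ)).restrict R).withDensity
      (fun p => ENNReal.ofReal |(B p).det|)).withDensity (fun x => h (S x)) = σ := by
    rw [← withDensity_mul _ hdetm (show Measurable fun x => h (S x) from hhm.comp hSm)]
    exact withDensity_congr_ae (ae_of_all _ fun p => rfl)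
  have step3 : (gammaMeasure α₁ lam).prod (gammaMeasure α₂ lam) = Measure.map S σ := by
    rw [step1, step2, ← key, aux_withDensity_map _ hSm hhm, e]
  have hσRc : σ Rᶜ = 0 := by
    rw [hσ, withDensity_apply _ hRm.compl, Measure.restrict_restrict hRm.compl,
      compl_inter_self, Measure.restrict_empty, lintegral_zero_measure]
  have step4 : Measure.map T ((gammaMeasure α₁ lam).prod (gammaMeasure α₂ lam)) = σ := by
    rw [step3, Measure.map_map hTm hSm]
    have hae : T ∘ S =ᵐ[σ] id := by
      refine ae_iff.2 (measure_mono_null (fun p hp => ?_) hσRc)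
      simp only [mem_setOf_eq, Function.comp_apply, id_eq] at hp
      intro hpR
      apply hp
      obtain ⟨⟨hu0, hu1⟩, hv⟩ := hpR
      have hv' : (0:ℝ) < p.2 := hv
      have hsum : p.1 * p.2 + (1 - p.1) * p.2 = p.2 := by ring
      simp only [hT, hS, hsum]
      exact Prod.ext (mul_div_cancel_right₀ p.1 hv'.ne') rfl
    rw [Measure.map_congr hae, Measure.map_id]
  -- identify σ as a product
  have hkae : k =ᵐ[(volume : Measure (ℝ × ℝ)).restrict R]
      fun p => auxBetaPDF α₁ α₂ p.1 * gammaPDF (α₁ + α₂) lam p.2 := by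
    refine (ae_restrict_iff' hRm).mpr (ae_of_all _ fun p hp => ?_)
    obtain ⟨⟨hu0, hu1⟩, hv⟩ := hp
    have hv' : (0:ℝ) < p.2 := hv
    have h1u : (0:ℝ) < 1 - p.1 := by linarith
    have hΓ₁ := Gamma_pos_of_pos hα₁
    have hΓ₂ := Gamma_pos_of_pos hα₂
    have hΓ := Gamma_pos_of_pos (show (0:ℝ) < α₁ + α₂ by linarith)
    have hA : (0:ℝ) ≤ lam ^ α₁ / Gamma α₁ * (p.1 * p.2) ^ (α₁ - 1)
        * exp (-(lam * (p.1 * p.2))) := by positivity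
    have hBb : (0:ℝ) ≤ lam ^ α₂ / Gamma α₂ * ((1 - p.1) * p.2) ^ (α₂ - 1)
        * exp (-(lam * ((1 - p.1) * p.2))) := by positivity
    have hBeta : (0:ℝ) ≤ Gamma (α₁ + α₂) / (Gamma α₁ * Gamma α₂)
        * p.1 ^ (α₁ - 1) * (1 - p.1) ^ (α₂ - 1) := by positivity
    simp only [hk, hS, hBdet, abs_of_pos hv', hh]
    rw [gammaPDF_of_nonneg (by positivity), gammaPDF_of_nonneg (by positivity),
      gammaPDF_of_nonneg hv'.le]
    rw [← ENNReal.ofReal_mul hA, ← ENNReal.ofReal_mul (le_of_lt hv'),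
      aux_density_identity hα₁ hα₂ hlam hu0 hu1 hv', ENNReal.ofReal_mul hBeta]
    rfl
  have hrestr : (volume : Measure (ℝ × ℝ)).restrict R
      = ((volume : Measure ℝ).restrict (Ioo 0 1)).prod ((volume : Measure ℝ).restrict (Ioi 0)) := by
    rw [Measure.prod_restrict, ← Measure.volume_eq_prod]
  have step5 : σ = (volume.withDensity ((Ioo (0:ℝ) 1).indicator (auxBetaPDF α₁ α₂))).prod
      (gammaMeasure (α₁ + α₂) lam) := by
    rw [hσ, withDensity_congr_ae hkae, hrestr,
      ← aux_prod_withDensity (aux_measurable_betaPDF α₁ α₂) (aux_measurable_gammaPDF (α₁ + α₂) lam),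
      withDensity_indicator measurableSet_Ioo]
    congr 1
    rw [← withDensity_indicator measurableSet_Ioi]
    show _ = volume.withDensity (gammaPDF (α₁ + α₂) lam)
    apply withDensity_congr_ae
    have h0 : ∀ᵐ x : ℝ ∂volume, x ≠ 0 := by
      refine ae_iff.2 (measure_mono_null (t := {(0:ℝ)}) (fun x hx => ?_)
        Real.volume_singleton)
      simpa using hx
    filter_upwards [h0] with x hx
    rcases lt_or_gt_of_ne hx with hneg | hpos
    · simp [Set.indicator, not_lt.mpr hneg.le, gammaPDF_of_neg hneg,
        mem_Ioi, hneg.not_gt]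
    · simp [Set.indicator, mem_Ioi, hpos]
  rw [step4, step5]

end BetaGammaAux

open Set Real in
/-- If `X₁, X₂` are independent gamma random variables with shape
parameters `α₁, α₂ > 0` and the same rate parameter `lam > 0`, then the proportion
`X₁ / (X₁ + X₂)` and the sum `X₁ + X₂` are independent. -/
theorem proportion_indep_sum_of_gamma
    {Ω : Type*} [MeasurableSpace Ω] (P : Measure Ω) [IsProbabilityMeasure P]
    (X₁ X₂ : Ω → ℝ) (hm₁ : Measurable X₁) (hm₂ : Measurable X₂)
    (α₁ α₂ lam : ℝ) (hα₁ : 0 < α₁) (hα₂ : 0 < α₂) (hlam : 0 < lam)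
    (hX₁ : Measure.map X₁ P = gammaMeasure α₁ lam)
    (hX₂ : Measure.map X₂ P = gammaMeasure α₂ lam)
    (hindep : IndepFun X₁ X₂ P) :
    IndepFun (fun ω => X₁ ω / (X₁ ω + X₂ ω)) (fun ω => X₁ ω + X₂ ω) P := by
  haveI h₁ : IsProbabilityMeasure (gammaMeasure α₁ lam) := isProbabilityMeasure_gammaMeasure hα₁ hlam
  haveI h₂ : IsProbabilityMeasure (gammaMeasure α₂ lam) := isProbabilityMeasure_gammaMeasure hα₂ hlam
  haveI h₁₂ : IsProbabilityMeasure (gammaMeasure (α₁ + α₂) lam) :=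
    isProbabilityMeasure_gammaMeasure (by linarith) hlam
  set W : Ω → ℝ × ℝ := fun ω => (X₁ ω, X₂ ω) with hW
  have hWm : Measurable W := hm₁.prodMk hm₂
  set T : ℝ × ℝ → ℝ × ℝ := fun p => (p.1 / (p.1 + p.2), p.1 + p.2) with hT
  have hTm : Measurable T := (measurable_fst.div (measurable_fst.add measurable_snd)).prodMk
    (measurable_fst.add measurable_snd)
  have hmapW : Measure.map W P = (gammaMeasure α₁ lam).prod (gammaMeasure α₂ lam) := by
    rw [← hX₁, ← hX₂]
    exact (indepFun_iff_map_prod_eq_prod_map_map hm₁.aemeasurable hm₂.aemeasurable).mp hindep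
  set ν₁ : Measure ℝ := volume.withDensity ((Ioo (0:ℝ) 1).indicator (auxBetaPDF α₁ α₂)) with hν₁
  set ν₂ : Measure ℝ := gammaMeasure (α₁ + α₂) lam with hν₂
  have hpair : Measure.map (fun ω => (X₁ ω / (X₁ ω + X₂ ω), X₁ ω + X₂ ω)) P = ν₁.prod ν₂ := by
    have : (fun ω => (X₁ ω / (X₁ ω + X₂ ω), X₁ ω + X₂ ω)) = T ∘ W := rfl
    rw [this, ← Measure.map_map hTm hWm, hmapW, gamma_map_T hα₁ hα₂ hlam]
  have hUm : Measurable fun ω => X₁ ω / (X₁ ω + X₂ ω) := hm₁.div (hm₁.add hm₂)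
  have hVm : Measurable fun ω => X₁ ω + X₂ ω := hm₁.add hm₂
  haveI : IsProbabilityMeasure (Measure.map (fun ω =>
      (X₁ ω / (X₁ ω + X₂ ω), X₁ ω + X₂ ω)) P) :=
    Measure.isProbabilityMeasure_map (hUm.prodMk hVm).aemeasurable
  haveI hν₁P : IsProbabilityMeasure ν₁ := by
    constructor
    have h1 := measure_univ (μ := Measure.map (fun ω =>
      (X₁ ω / (X₁ ω + X₂ ω), X₁ ω + X₂ ω)) P)
    rwa [hpair, ← Set.univ_prod_univ, Measure.prod_prod,
      (measure_univ : ν₂ univ = 1), mul_one] at h1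
  have hU : Measure.map (fun ω => X₁ ω / (X₁ ω + X₂ ω)) P = ν₁ := by
    have : (fun ω => X₁ ω / (X₁ ω + X₂ ω))
        = Prod.fst ∘ (fun ω => (X₁ ω / (X₁ ω + X₂ ω), X₁ ω + X₂ ω)) := rfl
    rw [this, ← Measure.map_map measurable_fst (hUm.prodMk hVm), hpair,
      Measure.map_fst_prod, measure_univ, one_smul]
  have hV : Measure.map (fun ω => X₁ ω + X₂ ω) P = ν₂ := by
    have : (fun ω => X₁ ω + X₂ ω)
        = Prod.snd ∘ (fun ω => (X₁ ω / (X₁ ω + X₂ ω), X₁ ω + X₂ ω)) := rfl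
    rw [this, ← Measure.map_map measurable_snd (hUm.prodMk hVm), hpair,
      Measure.map_snd_prod, measure_univ, one_smul]
  exact (indepFun_iff_map_prod_eq_prod_map_map hUm.aemeasurable hVm.aemeasurable).mpr
    (by rw [hpair, hU, hV])
end

section
/- Let R follow the beta distribution with both shape parameters equal to α > 0, i.e., with density r^{α−1}(1−r)^{α−1}/B(α,α) on (0,1). Then E|2R − 1| = Γ(α + 1/2) / (√π · Γ(α + 1)). -/
open MeasureTheory ProbabilityTheory
open intervalIntegral

/-- The probability density function of the beta distribution with shape parameters
`a > 0` and `b > 0`: `u^(a−1)(1−u)^(b−1)/B(a,b)` on `(0,1)`, where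
`B(a,b) = Γ(a)Γ(b)/Γ(a+b)` is the beta function. -/
noncomputable def betaPDFReal (a b x : ℝ) : ℝ :=
  if x ∈ Set.Ioo (0 : ℝ) 1 then
    x ^ (a - 1) * (1 - x) ^ (b - 1) / (Real.Gamma a * Real.Gamma b / Real.Gamma (a + b))
  else 0

/-- The measure on `ℝ` defined by the beta distribution with shape parameters `a` and `b`. -/
noncomputable def betaMeasure (a b : ℝ) : Measure ℝ :=
  volume.withDensity (fun x => ENNReal.ofReal (_root_.betaPDFReal a b x))

-- integrability helpers
lemma aux_int_right (α : ℝ) (hα : 0 < α) (g : ℝ → ℝ) (hg : Continuous g) :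
    IntervalIntegrable (fun x => g x * (x ^ (α-1) * (1-x) ^ (α-1))) volume (1/2) 1 := by
  have h1 : IntervalIntegrable (fun x : ℝ => (1-x) ^ (α-1)) volume (1/2) 1 := by
    have := (intervalIntegral.intervalIntegrable_rpow' (a := 0) (b := 1/2)
      (by linarith : (-1:ℝ) < α - 1)).comp_sub_left 1
    norm_num at this
    exact this.symm
  have h2 : ContinuousOn (fun x : ℝ => g x * x ^ (α-1)) (Set.uIcc (1/2) 1) := by
    rw [Set.uIcc_of_le (by norm_num)]
    refine hg.continuousOn.mul (ContinuousOn.rpow_const continuousOn_id fun x hx => ?_)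
    exact Or.inl (by simp at hx; intro h; rw [h] at hx; linarith [hx.1])
  have := h1.continuousOn_mul h2
  simpa [mul_assoc] using this

lemma aux_int_left (α : ℝ) (hα : 0 < α) (g : ℝ → ℝ) (hg : Continuous g) :
    IntervalIntegrable (fun x => g x * (x ^ (α-1) * (1-x) ^ (α-1))) volume 0 (1/2) := by
  have h1 : IntervalIntegrable (fun x : ℝ => x ^ (α-1)) volume 0 (1/2) :=
    intervalIntegral.intervalIntegrable_rpow' (by linarith)
  have h2 : ContinuousOn (fun x : ℝ => g x * (1-x) ^ (α-1)) (Set.uIcc 0 (1/2)) := by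
    rw [Set.uIcc_of_le (by norm_num)]
    refine hg.continuousOn.mul (ContinuousOn.rpow_const
      (continuousOn_const.sub continuousOn_id) fun x hx => ?_)
    exact Or.inl (by simp at hx; intro h; nlinarith [hx.2, sub_eq_zero.mp h])
  have := h1.continuousOn_mul h2
  have goal : (fun x : ℝ => (g x * (1-x) ^ (α-1)) * x ^ (α-1))
      = fun x : ℝ => g x * (x ^ (α-1) * (1-x) ^ (α-1)) := by
    funext x; ring
  rwa [goal] at this

lemma key_integral (α : ℝ) (hα : 0 < α) :
    ∫ x in (0:ℝ)..1, |2*x-1| * (x ^ (α-1) * (1-x) ^ (α-1))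
      = 2 * (1/4 : ℝ) ^ α / α := by
  have hI1 := aux_int_left α hα (fun x => |2*x-1|) (by continuity)
  have hI2 := aux_int_right α hα (fun x => |2*x-1|) (by continuity)
  rw [← intervalIntegral.integral_add_adjacent_intervals hI1 hI2]
  -- derivative helper
  have hderiv : ∀ x ∈ Set.Ioo (0:ℝ) 1,
      HasDerivAt (fun x : ℝ => (x*(1-x)) ^ α / α)
        ((1-2*x) * (x ^ (α-1) * (1-x) ^ (α-1))) x := by
    intro x hx
    have hx0 : (0:ℝ) < x := hx.1
    have hx1 : x < 1 := hx.2
    have hne : x * (1-x) ≠ 0 := by nlinarith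
    have h : HasDerivAt (fun x : ℝ => x * (1-x)) (1 - 2*x) x := by
      have := (hasDerivAt_id x).mul ((hasDerivAt_id x).const_sub 1)
      simp only [id] at this; exact this.congr_deriv (by ring)
    have h2 := (h.rpow_const (p := α) (Or.inl hne)).div_const α
    refine h2.congr_deriv ?_
    rw [Real.mul_rpow hx0.le (by linarith : (0:ℝ) ≤ 1 - x)]
    field_simp
  have hcontF : ContinuousOn (fun x : ℝ => (x*(1-x)) ^ α / α) (Set.Icc (0:ℝ) 1) := by
    exact ((continuousOn_id.mul (continuousOn_const.sub continuousOn_id)).rpow_const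
      (fun x _ => Or.inr hα.le)).div_const α
  have hval : ((1/2 : ℝ) * (1 - 1/2)) ^ α / α = (1/4:ℝ)^α / α := by norm_num
  have hpiece1 : ∫ x in (0:ℝ)..(1/2), |2*x-1| * (x ^ (α-1) * (1-x) ^ (α-1))
      = (1/4:ℝ)^α / α := by
    rw [intervalIntegral.integral_congr (g := fun x => (1-2*x) * (x ^ (α-1) * (1-x) ^ (α-1)))
      (by intro x hx
          rw [Set.uIcc_of_le (by norm_num)] at hx
          have : |2*x-1| = 1-2*x := by rw [abs_of_nonpos (by linarith [hx.2])]; ring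
          simp only [this])]
    rw [intervalIntegral.integral_eq_sub_of_hasDeriv_right_of_le (by norm_num)
      (hcontF.mono (by intro x hx; constructor <;> [exact hx.1; linarith [hx.2]]))
      (fun x hx => (hderiv x ⟨hx.1, by linarith [hx.2]⟩).hasDerivWithinAt)
      (aux_int_left α hα (fun x => 1-2*x) (by continuity))]
    rw [hval]
    simp [Real.zero_rpow hα.ne']
  have hpiece2 : ∫ x in (1/2:ℝ)..1, |2*x-1| * (x ^ (α-1) * (1-x) ^ (α-1))
      = (1/4:ℝ)^α / α := by
    rw [intervalIntegral.integral_congr (g := fun x => (2*x-1) * (x ^ (α-1) * (1-x) ^ (α-1)))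
      (by intro x hx
          rw [Set.uIcc_of_le (by norm_num)] at hx
          have : |2*x-1| = 2*x-1 := abs_of_nonneg (by linarith [hx.1])
          simp only [this])]
    have hderiv2 : ∀ x ∈ Set.Ioo (1/2:ℝ) 1,
        HasDerivAt (fun x : ℝ => -((x*(1-x)) ^ α / α))
          ((2*x-1) * (x ^ (α-1) * (1-x) ^ (α-1))) x := by
      intro x hx
      have := (hderiv x ⟨by linarith [hx.1], hx.2⟩).neg
      exact this.congr_deriv (by ring)
    rw [intervalIntegral.integral_eq_sub_of_hasDeriv_right_of_le (by norm_num)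
      ((hcontF.mono (by intro x hx; constructor <;> [linarith [hx.1]; exact hx.2])).neg)
      (fun x hx => (hderiv2 x hx).hasDerivWithinAt)
      (aux_int_right α hα (fun x => 2*x-1) (by continuity))]
    simp only [Pi.neg_apply]
    rw [show ((1:ℝ)*(1-1)) = 0 by ring, Real.zero_rpow hα.ne']
    rw [hval]
    ring
  rw [hpiece1, hpiece2]
  ring

/-- If `R` follows a beta distribution with both shape parameters equal
to `α > 0`, then `E|2R − 1| = Γ(α + 1/2) / (√π · Γ(α + 1))`. -/
theorem expectation_abs_two_beta_sub_one
    {Ω : Type*} [MeasurableSpace Ω] (P : Measure Ω) [IsProbabilityMeasure P]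
    (R : Ω → ℝ) (hm : Measurable R) (α : ℝ) (hα : 0 < α)
    (hR : Measure.map R P = _root_.betaMeasure α α) :
    ∫ ω, |2 * R ω - 1| ∂P
      = Real.Gamma (α + 1 / 2) / (Real.sqrt Real.pi * Real.Gamma (α + 1)) := by
  have hGα : 0 < Real.Gamma α := Real.Gamma_pos_of_pos hα
  have hG2α : 0 < Real.Gamma (α + α) := Real.Gamma_pos_of_pos (by linarith)
  have hpdf_meas : Measurable (_root_.betaPDFReal α α) := by
    unfold _root_.betaPDFReal
    exact Measurable.ite measurableSet_Ioo
      (by fun_prop) measurable_const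
  have hpdf_nonneg : ∀ x, 0 ≤ _root_.betaPDFReal α α x := by
    intro x
    unfold _root_.betaPDFReal
    split_ifs with h
    · have hx0 : (0:ℝ) < x := h.1
      have hx1 : x < 1 := h.2
      have h1x : (0:ℝ) < 1 - x := by linarith
      positivity
    · exact le_refl _
  have hfae : AEStronglyMeasurable (fun x : ℝ => |2*x-1|) (_root_.betaMeasure α α) :=
    (Continuous.abs (by continuity)).aestronglyMeasurable
  have h1 : ∫ ω, |2 * R ω - 1| ∂P = ∫ x, |2*x-1| ∂(_root_.betaMeasure α α) := by
    rw [← hR]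
    exact (integral_map hm.aemeasurable (hR ▸ hfae)).symm
  rw [h1]
  have h2 : ∫ x, |2*x-1| ∂(_root_.betaMeasure α α)
      = ∫ x, _root_.betaPDFReal α α x * |2*x-1| := by
    rw [_root_.betaMeasure,
      show (fun x => ENNReal.ofReal (_root_.betaPDFReal α α x))
        = (fun x => ((_root_.betaPDFReal α α x).toNNReal : ENNReal)) from rfl,
      integral_withDensity_eq_integral_smul hpdf_meas.real_toNNReal]
    congr 1; funext x
    rw [NNReal.smul_def, Real.coe_toNNReal _ (hpdf_nonneg x), smul_eq_mul]
  rw [h2]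
  set B := Real.Gamma α * Real.Gamma α / Real.Gamma (α + α) with hB
  have h3 : (fun x => _root_.betaPDFReal α α x * |2*x-1|)
      = Set.indicator (Set.Ioo 0 1)
          (fun x => (|2*x-1| * (x^(α-1)*(1-x)^(α-1)))/B) := by
    funext x
    rw [Set.indicator_apply]
    unfold _root_.betaPDFReal
    split_ifs with h
    · rw [hB]; ring
    · simp
  rw [h3, MeasureTheory.integral_indicator measurableSet_Ioo, MeasureTheory.integral_div]
  have h4 : ∫ x in Set.Ioo (0:ℝ) 1, |2*x-1| * (x^(α-1)*(1-x)^(α-1))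
      = ∫ x in (0:ℝ)..1, |2*x-1| * (x^(α-1)*(1-x)^(α-1)) := by
    rw [intervalIntegral.integral_of_le (by norm_num),
      MeasureTheory.integral_Ioc_eq_integral_Ioo]
  rw [h4, key_integral α hα]
  -- final algebra
  have hpow : 2 * (1/4:ℝ)^α = (2:ℝ) ^ (1 - 2*α) := by
    have h14 : ((1:ℝ)/4) ^ α = (2:ℝ) ^ (-2*α) := by
      rw [show (-2*α : ℝ) = (-2:ℝ)*α by ring,
        Real.rpow_mul (by norm_num : (0:ℝ) ≤ 2)]
      congr 1
      rw [show (-2:ℝ) = ((-2:ℤ):ℝ) by norm_num, Real.rpow_intCast]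
      norm_num
    rw [h14, show (1 - 2*α : ℝ) = 1 + (-2*α) by ring,
      Real.rpow_add (by norm_num : (0:ℝ) < 2), Real.rpow_one]
  have h2a : α + α = 2*α := by ring
  have hGa1 : Real.Gamma (α+1) = α * Real.Gamma α := Real.Gamma_add_one hα.ne'
  have hG2 : 0 < Real.Gamma (2*α) := Real.Gamma_pos_of_pos (by linarith)
  have hsp : (0:ℝ) < Real.sqrt Real.pi := Real.sqrt_pos.mpr Real.pi_pos
  have hdup := Real.Gamma_mul_Gamma_add_half α
  rw [hB, h2a, hGa1, hpow]
  set g1 := Real.Gamma α with hg1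
  set g2 := Real.Gamma (2*α) with hg2
  set g3 := Real.Gamma (α + 1/2) with hg3
  set sp := Real.sqrt Real.pi with hsp2
  set t := (2:ℝ) ^ (1 - 2*α) with ht
  have ht0 : 0 < t := Real.rpow_pos_of_pos (by norm_num) _
  field_simp
  linear_combination (-1 : ℝ) * hdup
end

section
/- Let n ≥ 1 and let Y₁, …, Yₙ be i.i.d. random variables following the gamma distribution with shape parameter α > 0 and rate parameter λ > 0, and let S = ∑_{i=1}^n Yᵢ. Then E( ∏_{i=1}^n (Yᵢ/S)^{1/n} ) = Γ(α + 1/n)ⁿ / (nα · Γ(α)ⁿ). -/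
open MeasureTheory ProbabilityTheory Real Set
open scoped ENNReal

lemma aux_lintegral_prod {Ω ι : Type*} [MeasurableSpace Ω] {μ : Measure Ω} [IsProbabilityMeasure μ]
    {f : ι → Ω → ℝ≥0∞} (hf : ∀ i, Measurable (f i))
    (h : iIndepFun f μ) (s : Finset ι) :
    ∫⁻ ω, ∏ i ∈ s, f i ω ∂μ = ∏ i ∈ s, ∫⁻ ω, f i ω ∂μ := by
  classical
  induction s using Finset.induction_on with
  | empty => simp
  | @insert i s hi ih =>
    simp only [Finset.prod_insert hi]; rw [← ih]
    have hindep : IndepFun (fun ω => ∏ j ∈ s, f j ω) (f i) μ := by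
      have heq : (∏ j ∈ s, f j) = fun ω => ∏ j ∈ s, f j ω := by ext ω; simp
      rw [← heq]; exact h.indepFun_finsetProd_of_notMem hf hi
    have := lintegral_mul_eq_lintegral_mul_lintegral_of_indepFun
      (s.measurable_prod fun j _ => hf j) (hf i) hindep
    simp only [Pi.mul_apply, Finset.prod_apply] at this ⊢
    rw [mul_comm (∫⁻ ω, f i ω ∂μ)]
    rw [← this]
    congr 1; ext ω; ring

lemma aux_gamma_laplace {α lam c t : ℝ} (hα : 0 < α) (hlam : 0 < lam) (hc : 0 < c) (ht : 0 ≤ t) :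
    ∫⁻ y, ENNReal.ofReal (y ^ c * Real.exp (-(t * y))) ∂(gammaMeasure α lam)
      = ENNReal.ofReal (lam ^ α * Real.Gamma (α + c) / (Real.Gamma α * (lam + t) ^ (α + c))) := by
  have hlt : 0 < lam + t := by linarith
  have hαc : 0 < α + c := by linarith
  have hΓ : (0:ℝ) < Real.Gamma α := Real.Gamma_pos_of_pos hα
  have hΓc : (0:ℝ) < Real.Gamma (α + c) := Real.Gamma_pos_of_pos hαc
  have hpow : (0:ℝ) < (lam + t) ^ (α + c) := Real.rpow_pos_of_pos hlt _
  set K : ℝ := lam ^ α * Real.Gamma (α + c) / (Real.Gamma α * (lam + t) ^ (α + c)) with hK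
  have hKnn : 0 ≤ K := by positivity
  have hmeas : Measurable fun y : ℝ => ENNReal.ofReal (y ^ c * Real.exp (-(t * y))) := by
    apply Measurable.ennreal_ofReal
    exact (measurable_id.pow_const c).mul ((measurable_id.const_mul t).neg.exp)
  have hpdfm : Measurable (gammaPDF α lam) := (measurable_gammaPDFReal α lam).ennreal_ofReal
  rw [gammaMeasure, lintegral_withDensity_eq_lintegral_mul _ hpdfm hmeas]
  have hae : ∀ᵐ y : ℝ, y ≠ 0 := by
    have : (volume : Measure ℝ) {(0:ℝ)} = 0 := measure_singleton 0
    filter_upwards [measure_eq_zero_iff_ae_notMem.mp this] with y hy using hy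
  calc ∫⁻ y, (gammaPDF α lam * fun y => ENNReal.ofReal (y ^ c * Real.exp (-(t * y)))) y
      = ∫⁻ y, ENNReal.ofReal K * gammaPDF (α + c) (lam + t) y := by
        refine lintegral_congr_ae ?_
        filter_upwards [hae] with y hy
        simp only [Pi.mul_apply]
        rcases lt_or_gt_of_ne hy with hneg | hpos
        · rw [gammaPDF_of_neg hneg, gammaPDF_of_neg hneg, zero_mul, mul_zero]
        · rw [gammaPDF_of_nonneg hpos.le, gammaPDF_of_nonneg hpos.le,
            ← ENNReal.ofReal_mul (by positivity), ← ENNReal.ofReal_mul hKnn]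
          congr 1
          have e1 : y ^ (α + c - 1) = y ^ (α - 1) * y ^ c := by
            rw [← Real.rpow_add hpos]; ring_nf
          have e2 : Real.exp (-((lam + t) * y)) = Real.exp (-(lam * y)) * Real.exp (-(t * y)) := by
            rw [← Real.exp_add]; ring_nf
          rw [e1, e2, hK]
          field_simp
    _ = ENNReal.ofReal K := by
        have hm2 : Measurable (gammaPDF (α + c) (lam + t)) :=
          (measurable_gammaPDFReal _ _).ennreal_ofReal
        rw [lintegral_const_mul _ hm2, lintegral_gammaPDF_eq_one hαc hlt, mul_one]

lemma aux_exp_lintegral {s : ℝ} (hs : 0 < s) :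
    ∫⁻ t in Set.Ioi (0:ℝ), ENNReal.ofReal (Real.exp (-(t * s))) = ENNReal.ofReal (1 / s) := by
  have hint : IntegrableOn (fun t : ℝ => Real.exp (-(t * s))) (Ioi 0) := by
    have := exp_neg_integrableOn_Ioi 0 hs
    apply this.congr_fun (fun x _ => by ring_nf) measurableSet_Ioi
  rw [← ofReal_integral_eq_lintegral_ofReal hint (ae_of_all _ fun t => (Real.exp_pos _).le)]
  congr 1
  have h1 : ∫ t in Ioi (0:ℝ), t ^ ((1:ℝ) - 1) * Real.exp (-(s * t)) = (1/s) ^ (1:ℝ) * Real.Gamma 1 :=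
    integral_rpow_mul_exp_neg_mul_Ioi one_pos hs
  simp only [sub_self, Real.rpow_zero, one_mul, Real.Gamma_one, mul_one, Real.rpow_one] at h1
  rw [← h1]
  refine setIntegral_congr_fun measurableSet_Ioi fun t _ => by ring_nf

lemma aux_rpow_lintegral {lam p : ℝ} (hlam : 0 < lam) (hp : 0 < p) :
    ∫⁻ t in Set.Ioi (0:ℝ), ENNReal.ofReal ((lam + t) ^ (-(p+1)))
      = ENNReal.ofReal (lam ^ (-p) / p) := by
  have ha : -(p+1) < -1 := by linarith
  have hmapeq : Measure.map (fun t : ℝ => lam + t) (volume.restrict (Ioi (0:ℝ)))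
      = volume.restrict (Ioi lam) := by
    have h1 : (fun t : ℝ => lam + t) ⁻¹' (Ioi lam) = Ioi 0 := by
      ext x; simp [Set.mem_Ioi]
    rw [← h1, ← Measure.restrict_map (measurable_const_add lam) measurableSet_Ioi,
      map_add_left_eq_self volume lam]
  have hstep : ∫⁻ t in Set.Ioi (0:ℝ), ENNReal.ofReal ((lam + t) ^ (-(p+1)))
      = ∫⁻ u in Set.Ioi lam, ENNReal.ofReal (u ^ (-(p+1))) := by
    rw [← hmapeq, lintegral_map (by fun_prop) (measurable_const_add lam)]
  rw [hstep, ← ofReal_integral_eq_lintegral_ofReal (integrableOn_Ioi_rpow_of_lt ha hlam)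
    ((ae_restrict_iff' measurableSet_Ioi).2 (ae_of_all _ fun u hu =>
      Real.rpow_nonneg (le_of_lt (lt_trans hlam hu)) _))]
  rw [integral_Ioi_rpow_of_lt ha hlam]
  congr 1
  have : -(p+1) + 1 = -p := by ring
  rw [this]
  field_simp

/-- For `n ≥ 1` i.i.d. samples `Y₁, …, Yₙ` from the gamma distribution
with shape `α > 0` and rate `lam > 0`, and `S = ∑ᵢ Yᵢ`, one has
`E( ∏ᵢ (Yᵢ/S)^(1/n) ) = Γ(α + 1/n)ⁿ / (nα · Γ(α)ⁿ)`. -/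
theorem expectation_geometric_proportion_gamma
    {Ω : Type*} [MeasurableSpace Ω] (P : Measure Ω) [IsProbabilityMeasure P]
    (n : ℕ) (hn : 1 ≤ n) (Y : Fin n → Ω → ℝ) (hm : ∀ i, Measurable (Y i))
    (α lam : ℝ) (hα : 0 < α) (hlam : 0 < lam)
    (hindep : iIndepFun Y P)
    (hY : ∀ i, Measure.map (Y i) P = gammaMeasure α lam)
    (S : Ω → ℝ) (hS : S = fun ω => ∑ i : Fin n, Y i ω) :
    ∫ ω, ∏ i : Fin n, (Y i ω / S ω) ^ (1 / (n : ℝ)) ∂P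
      = Real.Gamma (α + 1 / (n : ℝ)) ^ n / ((n : ℝ) * α * Real.Gamma α ^ n) := by
  have hn0 : (0:ℝ) < n := by exact_mod_cast hn
  haveI : Nonempty (Fin n) := Fin.pos_iff_nonempty.mp hn
  set c : ℝ := 1 / (n : ℝ) with hcdef
  have hc : 0 < c := by positivity
  have hcn : c * n = 1 := by rw [hcdef, one_div, inv_mul_cancel₀ hn0.ne']
  set p : ℝ := (n : ℝ) * α with hpdef
  have hp : 0 < p := by positivity
  have hΓ : (0:ℝ) < Real.Gamma α := Real.Gamma_pos_of_pos hα
  have hΓc : (0:ℝ) < Real.Gamma (α + c) := Real.Gamma_pos_of_pos (by linarith)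
  -- measurability of S
  have hmS : Measurable S := by rw [hS]; exact Finset.measurable_sum _ fun i _ => hm i
  -- a.e. positivity of the Y i
  have hIic : gammaMeasure α lam (Set.Iic 0) = 0 := by
    rw [gammaMeasure, withDensity_apply _ measurableSet_Iic]
    have h0 : ∀ᵐ x : ℝ, x ≠ 0 := by
      have : (volume : Measure ℝ) {(0:ℝ)} = 0 := measure_singleton 0
      exact measure_eq_zero_iff_ae_notMem.mp this
    have : ∀ᵐ x ∂(volume.restrict (Set.Iic (0:ℝ))), gammaPDF α lam x = 0 := by
      filter_upwards [ae_restrict_of_ae h0, ae_restrict_mem measurableSet_Iic] with x hx hx2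
      exact gammaPDF_of_neg (lt_of_le_of_ne hx2 hx)
    rw [lintegral_congr_ae this, lintegral_zero]
  have hYpos : ∀ᵐ ω ∂P, ∀ i, 0 < Y i ω := by
    rw [ae_all_iff]
    intro i
    have hmap : P (Y i ⁻¹' Set.Iic 0) = 0 := by
      rw [← Measure.map_apply (hm i) measurableSet_Iic, hY i]; exact hIic
    filter_upwards [measure_eq_zero_iff_ae_notMem.mp hmap] with ω hω
    exact not_le.mp hω
  -- the integrand is a.e. nonneg
  have hnn : 0 ≤ᵐ[P] fun ω => ∏ i : Fin n, (Y i ω / S ω) ^ c := by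
    filter_upwards [hYpos] with ω hω
    have hSpos : 0 < S ω := by
      rw [hS]; exact Finset.sum_pos (fun i _ => hω i) Finset.univ_nonempty
    exact Finset.prod_nonneg fun i _ =>
      Real.rpow_nonneg (div_nonneg (hω i).le hSpos.le) _
  have hmeasInt : Measurable fun ω => ∏ i : Fin n, (Y i ω / S ω) ^ c :=
    Finset.measurable_prod _ fun i _ => ((hm i).div hmS).pow measurable_const
  rw [integral_eq_lintegral_of_nonneg_ae hnn hmeasInt.aestronglyMeasurable]
  -- the key lintegral computation
  have hgm : ∀ t : ℝ, Measurable fun y : ℝ => ENNReal.ofReal (y ^ c * Real.exp (-(t * y))) :=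
    fun t => ((measurable_id.pow measurable_const).mul
      ((measurable_id.const_mul t).neg.exp)).ennreal_ofReal
  set G : ℝ → ℝ := fun t => lam ^ α * Real.Gamma (α + c) / (Real.Gamma α * (lam + t) ^ (α + c))
    with hGdef
  set C : ℝ := (lam ^ α * Real.Gamma (α + c) / Real.Gamma α) ^ n with hCdef
  have hCnn : 0 ≤ C := by positivity
  have key : ∫⁻ ω, ENNReal.ofReal (∏ i : Fin n, (Y i ω / S ω) ^ c) ∂P
      = ENNReal.ofReal (Real.Gamma (α + c) ^ n / (p * Real.Gamma α ^ n)) := by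
    calc ∫⁻ ω, ENNReal.ofReal (∏ i : Fin n, (Y i ω / S ω) ^ c) ∂P
        = ∫⁻ ω, (∫⁻ t in Set.Ioi (0:ℝ),
            ∏ i : Fin n, ENNReal.ofReal ((Y i ω) ^ c * Real.exp (-(t * Y i ω)))) ∂P := by
          refine lintegral_congr_ae ?_
          filter_upwards [hYpos] with ω hω
          have hSpos : 0 < S ω := by
            rw [hS]; exact Finset.sum_pos (fun i _ => hω i) Finset.univ_nonempty
          have e1 : ∏ i : Fin n, (Y i ω / S ω) ^ c
              = (∏ i : Fin n, (Y i ω) ^ c) * (1 / S ω) := by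
            calc ∏ i : Fin n, (Y i ω / S ω) ^ c
                = ∏ i : Fin n, ((Y i ω) ^ c / (S ω) ^ c) :=
                  Finset.prod_congr rfl fun i _ => Real.div_rpow (hω i).le hSpos.le _
              _ = (∏ i : Fin n, (Y i ω) ^ c) / ((S ω) ^ c) ^ n := by
                  rw [Finset.prod_div_distrib, Finset.prod_const, Finset.card_univ,
                    Fintype.card_fin]
              _ = (∏ i : Fin n, (Y i ω) ^ c) * (1 / S ω) := by
                  rw [← Real.rpow_natCast ((S ω) ^ c) n, ← Real.rpow_mul hSpos.le, hcn,
                    Real.rpow_one, div_eq_mul_one_div]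
          rw [e1, ENNReal.ofReal_mul (Finset.prod_nonneg fun i _ =>
            Real.rpow_nonneg (hω i).le _), ← aux_exp_lintegral hSpos,
            ← lintegral_const_mul' _ _ ENNReal.ofReal_ne_top]
          refine lintegral_congr fun t => ?_
          have hexp : Real.exp (-(t * S ω)) = ∏ i : Fin n, Real.exp (-(t * Y i ω)) := by
            rw [← Real.exp_sum]
            congr 1
            rw [hS, Finset.mul_sum]
            simp [Finset.sum_neg_distrib]
          rw [hexp, ← ENNReal.ofReal_mul (Finset.prod_nonneg fun i _ =>
              Real.rpow_nonneg (hω i).le _), ← Finset.prod_mul_distrib,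
            ENNReal.ofReal_prod_of_nonneg (fun i _ =>
              mul_nonneg (Real.rpow_nonneg (hω i).le _) (Real.exp_pos _).le)]
      _ = ∫⁻ t in Set.Ioi (0:ℝ),
            ∫⁻ ω, ∏ i : Fin n, ENNReal.ofReal ((Y i ω) ^ c * Real.exp (-(t * Y i ω))) ∂P := by
          refine lintegral_lintegral_swap ?_
          refine (Finset.measurable_prod Finset.univ fun i _ => ?_).aemeasurable
          refine Measurable.ennreal_ofReal ?_
          exact (((hm i).comp measurable_fst).pow measurable_const).mul
            ((measurable_snd.mul ((hm i).comp measurable_fst)).neg.exp)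
      _ = ∫⁻ t in Set.Ioi (0:ℝ), ENNReal.ofReal C
            * ENNReal.ofReal ((lam + t) ^ (-(p + 1))) := by
          refine setLIntegral_congr_fun measurableSet_Ioi fun t ht => ?_
          have ht' : (0:ℝ) < t := ht
          have hindep' : iIndepFun
              (fun i => (fun y : ℝ => ENNReal.ofReal (y ^ c * Real.exp (-(t * y)))) ∘ Y i) P :=
            hindep.comp _ fun i => hgm t
          have hfm : ∀ i : Fin n, Measurable
              ((fun y : ℝ => ENNReal.ofReal (y ^ c * Real.exp (-(t * y)))) ∘ Y i) :=
            fun i => (hgm t).comp (hm i)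
          have := aux_lintegral_prod hfm hindep' Finset.univ
          simp only [Function.comp_apply] at this
          rw [this]
          have heach : ∀ i : Fin n,
              ∫⁻ ω, ENNReal.ofReal ((Y i ω) ^ c * Real.exp (-(t * Y i ω))) ∂P
                = ENNReal.ofReal (G t) := by
            intro i
            rw [← lintegral_map (hgm t) (hm i), hY i]
            exact aux_gamma_laplace hα hlam hc ht'.le
          rw [Finset.prod_congr rfl fun i _ => heach i, Finset.prod_const, Finset.card_univ,
            Fintype.card_fin, ← ENNReal.ofReal_pow (by rw [hGdef]; positivity),
            ← ENNReal.ofReal_mul hCnn]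
          congr 1
          have hlt : (0:ℝ) < lam + t := by linarith
          have hne : ((lam + t) ^ (α + c)) ≠ 0 := (Real.rpow_pos_of_pos hlt _).ne'
          have e2 : ((lam + t) ^ (α + c)) ^ n = (lam + t) ^ (p + 1) := by
            rw [← Real.rpow_natCast ((lam + t) ^ (α + c)) n, ← Real.rpow_mul hlt.le]
            congr 1
            rw [hpdef, hcdef]
            field_simp
          simp only [hGdef, hCdef]
          rw [Real.rpow_neg hlt.le, ← e2]
          simp only [div_pow, mul_pow]
          field_simp
      _ = ENNReal.ofReal (Real.Gamma (α + c) ^ n / (p * Real.Gamma α ^ n)) := by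
          rw [lintegral_const_mul' _ _ ENNReal.ofReal_ne_top, aux_rpow_lintegral hlam hp,
            ← ENNReal.ofReal_mul hCnn]
          congr 1
          have e4 : (lam ^ α) ^ n = lam ^ p := by
            rw [← Real.rpow_natCast (lam ^ α) n, ← Real.rpow_mul hlam.le]
            congr 1
            rw [hpdef]; ring
          have e5 : lam ^ p * lam ^ (-p) = 1 := by
            rw [← Real.rpow_add hlam]; simp
          have eC : C = lam ^ p * (Real.Gamma (α + c) ^ n / Real.Gamma α ^ n) := by
            simp only [hCdef]
            rw [div_pow, mul_pow, e4]
            ring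
          calc C * (lam ^ (-p) / p)
              = (lam ^ p * lam ^ (-p)) * (Real.Gamma (α + c) ^ n / (Real.Gamma α ^ n * p)) := by
                rw [eC]; ring
            _ = Real.Gamma (α + c) ^ n / (p * Real.Gamma α ^ n) := by
                rw [e5]; ring
  have hden : (0:ℝ) < p * Real.Gamma α ^ n := mul_pos hp (pow_pos hΓ n)
  rw [key, ENNReal.toReal_ofReal (div_pos (pow_pos hΓc n) hden).le]
end

section
/- Let n ≥ 2 and let Y₁, …, Yₙ be i.i.d. random variables following the gamma distribution with shape parameter α > 0 and rate parameter λ > 0. Then the sample variance-to-mean ratio VMRₙ = (1/(n−1)) · (∑_{i=1}^n (Yᵢ − μₙ)²) / μₙ, where μₙ = (1/n)∑_{i=1}^n Yᵢ, satisfies E(VMRₙ) = nα / ((nα + 1)λ). -/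
open MeasureTheory ProbabilityTheory

open scoped ENNReal NNReal

section Auxiliary

open Real Set

lemma gamma_repr (α lam : ℝ) : gammaMeasure α lam
    = volume.withDensity fun y => (((gammaPDFReal α lam y).toNNReal : ℝ≥0) : ℝ≥0∞) := by
  rfl

lemma gamma_moment {α lam : ℝ} (hα : 0 < α) (hlam : 0 < lam) (k : ℕ) {c : ℝ} (hc : 0 ≤ c) :
    Integrable (fun y => y ^ k * Real.exp (-(c * y))) (gammaMeasure α lam) ∧
    ∫ y, y ^ k * Real.exp (-(c * y)) ∂(gammaMeasure α lam)
      = (Real.Gamma (α + k) / Real.Gamma α) * lam ^ α / (lam + c) ^ (α + k) := by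
  set φ : ℝ → ℝ≥0 := fun y => (gammaPDFReal α lam y).toNNReal with hφ
  have hφm : Measurable φ := (measurable_gammaPDFReal α lam).real_toNNReal
  set g : ℝ → ℝ := fun y => y ^ k * Real.exp (-(c * y)) with hg
  have hsmul : ∀ y, φ y • g y = gammaPDFReal α lam y * g y := by
    intro y
    simp [hφ, NNReal.smul_def, Real.coe_toNNReal _ (gammaPDFReal_nonneg hα hlam y)]
  set h : ℝ → ℝ := fun y => gammaPDFReal α lam y * g y with hh
  have hbc : 0 < lam + c := by linarith
  have hak : 0 < α + k := by positivity
  have h_ae : h =ᵐ[volume] Set.indicator (Ioi 0) h := by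
    filter_upwards [compl_mem_ae_iff.mpr (volume_singleton (a := (0:ℝ)))] with y hy
    rcases lt_trichotomy y 0 with h0 | h0 | h0
    · have hpdf : gammaPDFReal α lam y = 0 := by
        simp [gammaPDFReal, not_le.mpr h0]
      show gammaPDFReal α lam y * g y = _
      simp [indicator_of_notMem (by simpa using h0.le : y ∉ Ioi (0:ℝ)), hpdf]
    · exact absurd h0 (by simpa using hy)
    · simp [indicator_of_mem (mem_Ioi.mpr h0)]
  have hpt : ∀ y ∈ Ioi (0:ℝ), h y
      = lam ^ α / Real.Gamma α * (y ^ (α + k - 1) * Real.exp (-((lam + c) * y))) := by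
    intro y hy
    rw [mem_Ioi] at hy
    have hpdf : gammaPDFReal α lam y = lam ^ α / Real.Gamma α * y ^ (α - 1) * Real.exp (-(lam * y)) := by
      simp [gammaPDFReal, hy.le]
    show gammaPDFReal α lam y * g y = _
    rw [hpdf, hg]
    have hyk : (y : ℝ) ^ k = y ^ (k : ℝ) := by rw [Real.rpow_natCast]
    have hrp : y ^ (α - 1) * y ^ (k:ℝ) = y ^ (α + k - 1) := by
      rw [← Real.rpow_add hy]; ring_nf
    have hex : Real.exp (-(lam * y)) * Real.exp (-(c * y)) = Real.exp (-((lam + c) * y)) := by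
      rw [← Real.exp_add]; ring_nf
    calc lam ^ α / Real.Gamma α * y ^ (α - 1) * Real.exp (-(lam * y)) * (y ^ k * Real.exp (-(c * y)))
        = lam ^ α / Real.Gamma α * ((y ^ (α-1) * y ^ (k:ℝ)) * (Real.exp (-(lam * y)) * Real.exp (-(c * y)))) := by
          rw [← hyk]; ring
      _ = _ := by rw [hrp, hex]
  have hmodel : IntegrableOn (fun y : ℝ => y ^ (α + k - 1) * Real.exp (-((lam + c) * y))) (Ioi 0) := by
    have := integrableOn_rpow_mul_exp_neg_mul_rpow (s := α + k - 1) (p := 1) (b := lam + c)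
      (by linarith) zero_lt_one hbc
    refine this.congr ((ae_restrict_iff' measurableSet_Ioi).mpr
      (Filter.Eventually.of_forall fun y hy => by simp only [Real.rpow_one, neg_mul]))
  have hint : IntegrableOn h (Ioi 0) := by
    exact (hmodel.const_mul (lam ^ α / Real.Gamma α)).congr ((ae_restrict_iff' measurableSet_Ioi).mpr
      (Filter.Eventually.of_forall fun y hy => (hpt y hy).symm))
  have hInd : Integrable (Set.indicator (Ioi 0) h) volume :=
    (integrable_indicator_iff measurableSet_Ioi).mpr hint
  have hhint : Integrable h volume := hInd.congr h_ae.symm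
  have key : Integrable g (gammaMeasure α lam) := by
    rw [gamma_repr, integrable_withDensity_iff_integrable_smul hφm]
    exact hhint.congr (Filter.Eventually.of_forall fun y => (hsmul y).symm)
  refine ⟨key, ?_⟩
  rw [gamma_repr, integral_withDensity_eq_integral_smul hφm]
  calc ∫ y, φ y • g y = ∫ y, h y := by simp_rw [hsmul]; rfl
    _ = ∫ y, Set.indicator (Ioi 0) h y := integral_congr_ae h_ae
    _ = ∫ y in Ioi 0, h y := integral_indicator measurableSet_Ioi
    _ = ∫ y in Ioi 0, lam ^ α / Real.Gamma α * (y ^ (α + k - 1) * Real.exp (-((lam + c) * y))) :=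
        setIntegral_congr_fun measurableSet_Ioi hpt
    _ = lam ^ α / Real.Gamma α * ((1 / (lam + c)) ^ (α + k) * Real.Gamma (α + k)) := by
        rw [integral_const_mul, integral_rpow_mul_exp_neg_mul_Ioi hak hbc]
    _ = (Real.Gamma (α + k) / Real.Gamma α) * lam ^ α / (lam + c) ^ (α + k) := by
        rw [div_rpow zero_le_one hbc.le, one_rpow]
        field_simp

lemma pi_mixed {n : ℕ} {γ' : Measure ℝ} [IsProbabilityMeasure γ'] (i : Fin n) {f h : ℝ → ℝ}
    (hf : Integrable f γ') (hh : Integrable h γ') :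
    Integrable (fun x : Fin n → ℝ => f (x i) * ∏ j ∈ Finset.univ.erase i, h (x j))
      (Measure.pi fun _ => γ') ∧
    ∫ x : Fin n → ℝ, f (x i) * ∏ j ∈ Finset.univ.erase i, h (x j) ∂(Measure.pi fun _ => γ')
      = (∫ y, f y ∂γ') * (∫ y, h y ∂γ') ^ (n - 1) := by
  set g : Fin n → ℝ → ℝ := fun j => if j = i then f else h with hgdef
  have hfun : ∀ x : Fin n → ℝ, (∏ j, g j (x j))
      = f (x i) * ∏ j ∈ Finset.univ.erase i, h (x j) := by
    intro x
    rw [← Finset.mul_prod_erase Finset.univ (fun j => g j (x j)) (Finset.mem_univ i)]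
    congr 1
    · simp [hgdef]
    · exact Finset.prod_congr rfl fun j hj => by
        simp [hgdef, (Finset.mem_erase.mp hj).1]
  have hgint : ∀ j, Integrable (g j) γ' := by
    intro j; by_cases hj : j = i <;> simp [hgdef, hj, hf, hh]
  constructor
  · have := MeasureTheory.Integrable.fin_nat_prod (μ := fun _ => γ') hgint
    exact this.congr (Filter.Eventually.of_forall fun x => hfun x)
  · have := MeasureTheory.integral_fin_nat_prod_eq_prod (μ := fun _ => γ') g
    calc ∫ x : Fin n → ℝ, f (x i) * ∏ j ∈ Finset.univ.erase i, h (x j) ∂(Measure.pi fun _ => γ')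
        = ∫ x : Fin n → ℝ, ∏ j, g j (x j) ∂(Measure.pi fun _ => γ') := by
          exact integral_congr_ae (Filter.Eventually.of_forall fun x => (hfun x).symm)
      _ = ∏ j, ∫ y, g j y ∂γ' := this
      _ = (∫ y, f y ∂γ') * (∫ y, h y ∂γ') ^ (n - 1) := by
          rw [← Finset.mul_prod_erase Finset.univ (fun j => ∫ y, g j y ∂γ') (Finset.mem_univ i)]
          congr 1
          · simp [hgdef]
          · have heq : ∀ j ∈ Finset.univ.erase i, (∫ y, g j y ∂γ') = ∫ y, h y ∂γ' :=
              fun j hj => by simp [hgdef, (Finset.mem_erase.mp hj).1]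
            rw [Finset.prod_congr rfl heq, Finset.prod_const,
              Finset.card_erase_of_mem (Finset.mem_univ i), Finset.card_univ, Fintype.card_fin]

lemma gamma_Iic_null {α lam : ℝ} : gammaMeasure α lam (Iic 0) = 0 := by
  have h1 : gammaMeasure α lam (Iio 0) = 0 := by
    rw [gammaMeasure, withDensity_apply _ measurableSet_Iio]
    exact lintegral_gammaPDF_of_nonpos le_rfl
  have h2 : gammaMeasure α lam {0} = 0 := by
    rw [gammaMeasure, withDensity_apply _ (measurableSet_singleton 0),
      Measure.restrict_eq_zero.mpr (volume_singleton), lintegral_zero_measure]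
  have : gammaMeasure α lam (Iic 0) ≤ gammaMeasure α lam (Iio 0) + gammaMeasure α lam {0} := by
    rw [← Iio_union_right]; exact measure_union_le _ _
  simpa [h1, h2] using this

lemma pi_pos {n : ℕ} {α lam : ℝ} (hα : 0 < α) (hlam : 0 < lam) :
    ∀ᵐ x ∂(Measure.pi fun _ : Fin n => gammaMeasure α lam), ∀ i, 0 < x i := by
  have : IsProbabilityMeasure (gammaMeasure α lam) := isProbabilityMeasure_gammaMeasure hα hlam
  rw [ae_all_iff]
  intro i
  rw [ae_iff]
  have : {x : Fin n → ℝ | ¬ 0 < x i} = Function.eval i ⁻¹' (Iic 0) := by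
    ext x; simp [not_lt]
  rw [this]
  exact Measure.pi_eval_preimage_null _ gamma_Iic_null

lemma map_eq_pi {Ω : Type*} [MeasurableSpace Ω] (P : Measure Ω) [IsProbabilityMeasure P]
    {n : ℕ} (Y : Fin n → Ω → ℝ) (hm : ∀ i, Measurable (Y i))
    {α lam : ℝ} (hα : 0 < α) (hlam : 0 < lam)
    (hindep : iIndepFun Y P)
    (hY : ∀ i, Measure.map (Y i) P = gammaMeasure α lam) :
    Measure.map (fun ω i => Y i ω) P = Measure.pi fun _ : Fin n => gammaMeasure α lam := by
  have hg : IsProbabilityMeasure (gammaMeasure α lam) := isProbabilityMeasure_gammaMeasure hα hlam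
  refine (Measure.pi_eq fun s hs => ?_).symm
  rw [Measure.map_apply (measurable_pi_lambda _ hm) (MeasurableSet.univ_pi hs)]
  have hpre : (fun ω i => Y i ω) ⁻¹' (Set.pi univ s) = ⋂ i ∈ Finset.univ, Y i ⁻¹' s i := by
    ext ω; simp [Set.mem_pi]
  rw [hpre, hindep.measure_inter_preimage_eq_mul Finset.univ (fun i _ => hs i)]
  exact Finset.prod_congr rfl fun i _ => by
    rw [← Measure.map_apply (hm i) (hs i), hY i]

lemma gamma_exp_int (hα : 0 < α) (hlam : 0 < lam) {t : ℝ} (ht : 0 ≤ t) :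
    Integrable (fun y => Real.exp (-(t * y))) (gammaMeasure α lam) ∧
    ∫ y, Real.exp (-(t * y)) ∂(gammaMeasure α lam) = lam ^ α / (lam + t) ^ α := by
  have h := gamma_moment hα hlam 0 ht
  have he : (fun y : ℝ => y ^ (0:ℕ) * Real.exp (-(t * y))) = fun y => Real.exp (-(t * y)) := by
    funext y; simp
  rw [he] at h
  refine ⟨h.1, ?_⟩
  rw [h.2]
  simp [Real.Gamma_pos_of_pos hα |>.ne']
lemma gamma_sq_int (hα : 0 < α) (hlam : 0 < lam) {t : ℝ} (ht : 0 ≤ t) :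
    Integrable (fun y => y ^ 2 * Real.exp (-(t * y))) (gammaMeasure α lam) ∧
    ∫ y, y ^ 2 * Real.exp (-(t * y)) ∂(gammaMeasure α lam)
      = α * (α + 1) * lam ^ α / (lam + t) ^ (α + 2) := by
  have h := gamma_moment hα hlam 2 ht
  refine ⟨h.1, ?_⟩
  rw [h.2]
  have hG : Real.Gamma (α + 2) = (α + 1) * (α * Real.Gamma α) := by
    have h1 : Real.Gamma (α + 1) = α * Real.Gamma α := Real.Gamma_add_one hα.ne'
    have h2 : Real.Gamma ((α + 1) + 1) = (α + 1) * Real.Gamma (α + 1) :=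
      Real.Gamma_add_one (by positivity)
    rw [show α + 2 = (α + 1) + 1 by ring, h2, h1]
  rw [show ((2:ℕ):ℝ) = 2 by norm_num, hG]
  have h1 : (α + 1) * (α * Real.Gamma α) / Real.Gamma α = α * (α + 1) := by
    field_simp [Real.Gamma_pos_of_pos hα |>.ne']
  rw [h1]
lemma gamma_mean (hα : 0 < α) (hlam : 0 < lam) :
    Integrable (fun y : ℝ => y) (gammaMeasure α lam) ∧
    ∫ y, y ∂(gammaMeasure α lam) = α / lam := by
  have h := gamma_moment hα hlam 1 (le_refl (0:ℝ))
  have he : (fun y : ℝ => y ^ (1:ℕ) * Real.exp (-(0 * y))) = fun y : ℝ => y := by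
    funext y; simp
  rw [he] at h
  refine ⟨h.1, ?_⟩
  rw [h.2, show ((1:ℕ):ℝ) = 1 by norm_num, Real.Gamma_add_one hα.ne', add_zero,
    Real.rpow_add_one hlam.ne']
  have h1 : α * Real.Gamma α / Real.Gamma α = α := by
    field_simp [Real.Gamma_pos_of_pos hα |>.ne']
  rw [h1]
  rw [div_eq_div_iff (by positivity) hlam.ne']
  ring
lemma exp_Ioi_int {b : ℝ} (hb : 0 < b) :
    ∫ t in Ioi (0:ℝ), Real.exp (-(t * b)) = 1 / b := by
  have h : ∫ t in Ioi (0:ℝ), Real.exp (-(t * b)) = ∫ t in Ioi (0:ℝ), t ^ ((1:ℝ)-1) * Real.exp (-(b * t)) := by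
    refine setIntegral_congr_fun measurableSet_Ioi fun t ht => ?_
    rw [sub_self, Real.rpow_zero, one_mul, mul_comm]
  rw [h, integral_rpow_mul_exp_neg_mul_Ioi one_pos hb, Real.rpow_one, Real.Gamma_one, mul_one]

lemma shift_rpow_int {lam q : ℝ} (hl : 0 < lam) (hq : q < -1) :
    IntegrableOn (fun t => (lam + t) ^ q) (Ioi (0:ℝ)) ∧
      ∫ t in Ioi (0:ℝ), (lam + t) ^ q = -lam ^ (q+1) / (q+1) := by
  have hmp : MeasurePreserving (fun t : ℝ => lam + t) volume volume :=
    measurePreserving_add_left volume lam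
  have hemb : MeasurableEmbedding (fun t : ℝ => lam + t) :=
    (Homeomorph.addLeft lam).measurableEmbedding
  have hpre : (fun t : ℝ => lam + t) ⁻¹' (Ioi lam) = Ioi 0 := by
    ext t; simp [mem_Ioi]
  constructor
  · have h1 : IntegrableOn (fun u : ℝ => u ^ q) (Ioi lam) := integrableOn_Ioi_rpow_of_lt hq hl
    have := (hmp.integrableOn_comp_preimage hemb).mpr h1
    rwa [hpre] at this
  · have h2 := hmp.setIntegral_preimage_emb hemb (fun u : ℝ => u ^ q) (Ioi lam)
    rw [hpre] at h2
    rw [h2, integral_Ioi_rpow_of_lt hq hl]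

lemma Aval {n : ℕ} (hn : 2 ≤ n) {α lam b : ℝ} (hα : 0 < α) (hlam : 0 < lam) (hb : 0 < b) :
    (α * (α + 1) * lam ^ α / b ^ (α + 2)) * (lam ^ α / b ^ α) ^ (n - 1)
      = α * (α + 1) * lam ^ ((n:ℝ) * α) / b ^ ((n:ℝ) * α + 2) := by
  have hcast : ((n - 1 : ℕ) : ℝ) = (n : ℝ) - 1 := by
    rw [Nat.cast_sub (by omega)]; norm_num
  have h1 : (lam ^ α) ^ (n - 1 : ℕ) = lam ^ (α * ((n:ℝ) - 1)) := by
    rw [← Real.rpow_natCast (lam ^ α) (n - 1), ← Real.rpow_mul hlam.le, hcast]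
  have h2 : (b ^ α) ^ (n - 1 : ℕ) = b ^ (α * ((n:ℝ) - 1)) := by
    rw [← Real.rpow_natCast (b ^ α) (n - 1), ← Real.rpow_mul hb.le, hcast]
  rw [div_pow, h1, h2, div_mul_div_comm, mul_assoc (α * (α+1)), ← Real.rpow_add hlam,
    ← Real.rpow_add hb, show α + α * ((n:ℝ) - 1) = (n:ℝ) * α by ring,
    show α + 2 + α * ((n:ℝ) - 1) = (n:ℝ) * α + 2 by ring]



lemma coord_sq_div_sum {n : ℕ} (hn : 2 ≤ n) {α lam : ℝ} (hα : 0 < α) (hlam : 0 < lam) (i : Fin n) :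
    Integrable (fun x : Fin n → ℝ => (x i) ^ 2 / ∑ j, x j)
      (Measure.pi fun _ : Fin n => gammaMeasure α lam) ∧
    ∫ x, (x i) ^ 2 / ∑ j, x j ∂(Measure.pi fun _ : Fin n => gammaMeasure α lam)
      = α * (α + 1) / (((n:ℝ) * α + 1) * lam) := by
  have hprob : IsProbabilityMeasure (gammaMeasure α lam) := isProbabilityMeasure_gammaMeasure hα hlam
  set μpi : Measure (Fin n → ℝ) := Measure.pi fun _ : Fin n => gammaMeasure α lam with hπ
  set F : (Fin n → ℝ) → ℝ → ℝ := fun x t => (x i) ^ 2 * Real.exp (-(t * ∑ j, x j)) with hF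
  set C : ℝ := α * (α + 1) * lam ^ ((n:ℝ) * α) with hC
  set q : ℝ := -((n:ℝ) * α + 2) with hq
  have hnR : (2:ℝ) ≤ (n:ℝ) := by exact_mod_cast hn
  have hq1 : q < -1 := by
    have : 0 < (n:ℝ) * α := by positivity
    rw [hq]; linarith
  have hFprod : ∀ (t : ℝ) (x : Fin n → ℝ), F x t
      = (fun y => y ^ 2 * Real.exp (-(t * y))) (x i)
        * ∏ j ∈ Finset.univ.erase i, Real.exp (-(t * x j)) := by
    intro t x
    have hsum : ∑ j, x j = x i + ∑ j ∈ Finset.univ.erase i, x j :=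
      (Finset.add_sum_erase Finset.univ x (Finset.mem_univ i)).symm
    show (x i) ^ 2 * Real.exp (-(t * ∑ j, x j)) = _
    rw [hsum, mul_add, neg_add, Real.exp_add,
      show -(t * ∑ j ∈ Finset.univ.erase i, x j) = ∑ j ∈ Finset.univ.erase i, -(t * x j) by
        rw [Finset.mul_sum, ← Finset.sum_neg_distrib],
      Real.exp_sum]
    ring
  have hA : ∀ t : ℝ, 0 < t → Integrable (fun x => F x t) μpi ∧
      ∫ x, F x t ∂μpi = C / (lam + t) ^ ((n:ℝ) * α + 2) := by
    intro t ht
    have hexp := gamma_exp_int hα hlam ht.le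
    have hsq := gamma_sq_int hα hlam ht.le
    have hp := pi_mixed (n := n) (γ' := gammaMeasure α lam) i hsq.1 hexp.1
    have hfe : (fun x : Fin n → ℝ => F x t)
        = fun x => (fun y => y ^ 2 * Real.exp (-(t * y))) (x i)
            * ∏ j ∈ Finset.univ.erase i, Real.exp (-(t * x j)) := funext fun x => hFprod t x
    have hfe' : (fun x : Fin n → ℝ =>
        (fun y => y ^ 2 * Real.exp (-(t * y))) (x i)
          * ∏ j ∈ Finset.univ.erase i, (fun y => Real.exp (-(t * y))) (x j))
        = fun x : Fin n → ℝ => F x t := hfe.symm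
    constructor
    · rw [hfe]; exact hp.1
    · rw [hfe]
      rw [hp.2, hsq.2, hexp.2, Aval hn hα hlam (by linarith : (0:ℝ) < lam + t)]
  have hshift := shift_rpow_int (lam := lam) (q := q) hlam hq1
  have hrepr : ∀ t ∈ Ioi (0:ℝ), C / (lam + t) ^ ((n:ℝ) * α + 2) = C * (lam + t) ^ q := by
    intro t ht
    rw [mem_Ioi] at ht
    rw [hq, Real.rpow_neg (by linarith : (0:ℝ) ≤ lam + t), div_eq_mul_inv]
  have hAint : IntegrableOn (fun t => C / (lam + t) ^ ((n:ℝ) * α + 2)) (Ioi (0:ℝ)) := by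
    refine (hshift.1.const_mul C).congr ((ae_restrict_iff' measurableSet_Ioi).mpr
      (Filter.Eventually.of_forall fun t ht => (hrepr t ht).symm))
  have hAval : ∫ t in Ioi (0:ℝ), C / (lam + t) ^ ((n:ℝ) * α + 2)
      = α * (α + 1) / (((n:ℝ) * α + 1) * lam) := by
    rw [setIntegral_congr_fun measurableSet_Ioi hrepr, integral_const_mul, hshift.2]
    have hq2 : q + 1 = -((n:ℝ) * α + 1) := by rw [hq]; ring
    rw [hq2, neg_div_neg_eq]
    have hl2 : lam ^ ((n:ℝ) * α) * lam ^ (-((n:ℝ) * α + 1)) = lam⁻¹ := by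
      rw [← Real.rpow_add hlam, show (n:ℝ) * α + -((n:ℝ) * α + 1) = -1 by ring,
        Real.rpow_neg_one]
    rw [hC]
    have hpos : (0:ℝ) < (n:ℝ) * α + 1 := by positivity
    calc α * (α + 1) * lam ^ ((n:ℝ) * α) * (lam ^ (-((n:ℝ) * α + 1)) / ((n:ℝ) * α + 1))
        = α * (α + 1) * (lam ^ ((n:ℝ) * α) * lam ^ (-((n:ℝ) * α + 1))) / ((n:ℝ) * α + 1) := by
          ring
      _ = α * (α + 1) * lam⁻¹ / ((n:ℝ) * α + 1) := by rw [hl2]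
      _ = α * (α + 1) / (((n:ℝ) * α + 1) * lam) := by
          field_simp
  -- measurability of uncurry F
  have hFm : Measurable (Function.uncurry F) := by
    have h1 : Measurable fun p : (Fin n → ℝ) × ℝ => (p.1 i) ^ 2 :=
      ((measurable_pi_apply i).comp measurable_fst).pow_const 2
    have h2 : Measurable fun p : (Fin n → ℝ) × ℝ => ∑ j, p.1 j :=
      Finset.measurable_sum Finset.univ fun j _ => (measurable_pi_apply j).comp measurable_fst
    exact h1.mul (((measurable_snd.mul h2).neg).exp)
  have hFnn : ∀ (x : Fin n → ℝ) (t : ℝ), 0 ≤ F x t := by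
    intro x t
    have : (0:ℝ) ≤ (x i) ^ 2 := sq_nonneg _
    positivity
  have hFint : Integrable (Function.uncurry F) (μpi.prod (volume.restrict (Ioi 0))) := by
    rw [integrable_prod_iff' hFm.aestronglyMeasurable]
    constructor
    · rw [ae_restrict_iff' measurableSet_Ioi]
      exact Filter.Eventually.of_forall fun t ht => (hA t ht).1
    · have hnorm : ∀ t : ℝ, ∫ x, ‖F x t‖ ∂μpi = ∫ x, F x t ∂μpi := fun t =>
        integral_congr_ae (Filter.Eventually.of_forall fun x => norm_of_nonneg (hFnn x t))
      refine hAint.congr ((ae_restrict_iff' measurableSet_Ioi).mpr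
        (Filter.Eventually.of_forall fun t ht => ?_))
      show C / (lam + t) ^ ((n:ℝ) * α + 2) = ∫ x, ‖F x t‖ ∂μpi
      rw [hnorm t, (hA t ht).2]
  have hrep : ∀ᵐ x ∂μpi, (∫ t in Ioi (0:ℝ), F x t) = (x i) ^ 2 / ∑ j, x j := by
    filter_upwards [pi_pos (n := n) hα hlam] with x hx
    have hS : 0 < ∑ j, x j := Finset.sum_pos (fun j _ => hx j) ⟨i, Finset.mem_univ i⟩
    have : (∫ t in Ioi (0:ℝ), F x t)
        = (x i) ^ 2 * ∫ t in Ioi (0:ℝ), Real.exp (-(t * ∑ j, x j)) := by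
      rw [← integral_const_mul]
    rw [this, exp_Ioi_int hS, mul_one_div]
  have hswap := integral_integral_swap (μ := μpi) (ν := volume.restrict (Ioi 0)) hFint
  constructor
  · refine hFint.integral_prod_left.congr hrep
  · calc ∫ x, (x i) ^ 2 / ∑ j, x j ∂μpi
        = ∫ x, (∫ t in Ioi (0:ℝ), F x t) ∂μpi := (integral_congr_ae hrep).symm
      _ = ∫ t in Ioi (0:ℝ), ∫ x, F x t ∂μpi := hswap
      _ = ∫ t in Ioi (0:ℝ), C / (lam + t) ^ ((n:ℝ) * α + 2) := by
          refine setIntegral_congr_fun measurableSet_Ioi fun t ht => (hA t ht).2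
      _ = α * (α + 1) / (((n:ℝ) * α + 1) * lam) := hAval

lemma coord_mean {n : ℕ} {α lam : ℝ} (hα : 0 < α) (hlam : 0 < lam) (i : Fin n) :
    Integrable (fun x : Fin n → ℝ => x i) (Measure.pi fun _ : Fin n => gammaMeasure α lam) ∧
    ∫ x, x i ∂(Measure.pi fun _ : Fin n => gammaMeasure α lam) = α / lam := by
  have hprob : IsProbabilityMeasure (gammaMeasure α lam) := isProbabilityMeasure_gammaMeasure hα hlam
  have hmean := gamma_mean hα hlam
  have h1 : Integrable (fun _ : ℝ => (1:ℝ)) (gammaMeasure α lam) := integrable_const 1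
  have hp := pi_mixed (n := n) (γ' := gammaMeasure α lam) i hmean.1 h1
  have hfe : (fun x : Fin n → ℝ => (fun y : ℝ => y) (x i)
      * ∏ j ∈ Finset.univ.erase i, (fun _ : ℝ => (1:ℝ)) (x j)) = fun x : Fin n → ℝ => x i := by
    funext x; simp
  rw [hfe] at hp
  refine ⟨hp.1, ?_⟩
  rw [hp.2, hmean.2]
  simp


end Auxiliary

open Real Set in
/-- For `n ≥ 2` i.i.d. samples `Y₁, …, Yₙ` from the gamma distribution
with shape `α > 0` and rate `lam > 0`, the sample variance-to-mean ratio
`VMRₙ = (1/(n−1)) · (∑ᵢ (Yᵢ − μₙ)²) / μₙ` with `μₙ = (1/n)∑ᵢ Yᵢ` satisfies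
`E(VMRₙ) = nα / ((nα + 1) lam)`. -/
theorem expectation_sample_vmr_gamma
    {Ω : Type*} [MeasurableSpace Ω] (P : Measure Ω) [IsProbabilityMeasure P]
    (n : ℕ) (hn : 2 ≤ n) (Y : Fin n → Ω → ℝ) (hm : ∀ i, Measurable (Y i))
    (α lam : ℝ) (hα : 0 < α) (hlam : 0 < lam)
    (hindep : iIndepFun Y P)
    (hY : ∀ i, Measure.map (Y i) P = gammaMeasure α lam)
    (μₙ : Ω → ℝ) (hμₙ : μₙ = fun ω => (1 / (n : ℝ)) * ∑ i : Fin n, Y i ω) :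
    ∫ ω, (1 / ((n : ℝ) - 1)) * ((∑ i : Fin n, (Y i ω - μₙ ω) ^ 2) / μₙ ω) ∂P
      = (n : ℝ) * α / (((n : ℝ) * α + 1) * lam) := by
  subst hμₙ
  have hprob : IsProbabilityMeasure (gammaMeasure α lam) := isProbabilityMeasure_gammaMeasure hα hlam
  set μpi : Measure (Fin n → ℝ) := Measure.pi fun _ : Fin n => gammaMeasure α lam with hμpidef
  have hnR : (2:ℝ) ≤ (n:ℝ) := by exact_mod_cast hn
  have hn0 : (n:ℝ) ≠ 0 := by linarith
  have hn1 : (n:ℝ) - 1 ≠ 0 := by linarith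
  have hna : (0:ℝ) < (n:ℝ) * α + 1 := by positivity
  set G : (Fin n → ℝ) → ℝ := fun x =>
    (1 / ((n : ℝ) - 1)) * ((∑ i, (x i - (1 / (n:ℝ)) * ∑ j, x j) ^ 2) / ((1 / (n:ℝ)) * ∑ j, x j))
    with hG
  have hGm : Measurable G := by
    have hS : Measurable fun x : Fin n → ℝ => ∑ j, x j :=
      Finset.measurable_sum Finset.univ fun j _ => measurable_pi_apply j
    have hnum : Measurable fun x : Fin n → ℝ => ∑ i, (x i - (1 / (n:ℝ)) * ∑ j, x j) ^ 2 :=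
      Finset.measurable_sum Finset.univ fun i _ =>
        ((measurable_pi_apply i).sub (hS.const_mul _)).pow_const 2
    exact (measurable_const.mul (hnum.div (hS.const_mul _)))
  have hmap := map_eq_pi P Y hm hα hlam hindep hY
  -- transfer to pi measure
  have htrans : ∫ ω, (1 / ((n : ℝ) - 1)) * ((∑ i : Fin n, (Y i ω
        - (1 / (n:ℝ)) * ∑ j : Fin n, Y j ω) ^ 2) / ((1 / (n:ℝ)) * ∑ j : Fin n, Y j ω)) ∂P
      = ∫ x, G x ∂μpi := by
    rw [hμpidef, ← hmap,
      integral_map (measurable_pi_lambda _ hm).aemeasurable hGm.aestronglyMeasurable]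
  rw [htrans]
  -- pointwise identity a.e.
  set S : (Fin n → ℝ) → ℝ := fun x => ∑ j, x j with hS
  set T : (Fin n → ℝ) → ℝ := fun x => ∑ i, (x i) ^ 2 / S x with hT
  have hae : G =ᵐ[μpi] fun x => (1 / ((n : ℝ) - 1)) * ((n:ℝ) * T x - S x) := by
    filter_upwards [pi_pos (n := n) hα hlam] with x hx
    have hSpos : 0 < S x := Finset.sum_pos (fun j _ => hx j) ⟨⟨0, by omega⟩, Finset.mem_univ _⟩
    have hQ : ∑ i, (x i - (1 / (n:ℝ)) * S x) ^ 2
        = (∑ i, (x i) ^ 2) - 2 * ((1 / (n:ℝ)) * S x) * S x + (n:ℝ) * ((1 / (n:ℝ)) * S x) ^ 2 := by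
      calc ∑ i, (x i - (1 / (n:ℝ)) * S x) ^ 2
          = ∑ i, ((x i) ^ 2 - 2 * ((1 / (n:ℝ)) * S x) * x i + ((1 / (n:ℝ)) * S x) ^ 2) :=
            Finset.sum_congr rfl fun i _ => by ring
        _ = _ := by
            rw [Finset.sum_add_distrib, Finset.sum_sub_distrib, ← Finset.mul_sum,
              Finset.sum_const, Finset.card_univ, Fintype.card_fin, nsmul_eq_mul]
    have hTQ : T x = (∑ i, (x i) ^ 2) / S x := by
      show ∑ i, (x i) ^ 2 / S x = (∑ i, (x i) ^ 2) / S x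
      rw [← Finset.sum_div]
    rw [hG]
    show (1 / ((n : ℝ) - 1)) * ((∑ i, (x i - (1 / (n:ℝ)) * ∑ j, x j) ^ 2) / ((1 / (n:ℝ)) * ∑ j, x j))
      = (1 / ((n : ℝ) - 1)) * ((n:ℝ) * T x - S x)
    rw [show (∑ j, x j) = S x from rfl, hQ, hTQ]
    field_simp
    ring
  rw [integral_congr_ae hae]
  -- integrability
  have hTi : Integrable T μpi := by
    rw [hT]
    exact integrable_finset_sum _ fun i _ => (coord_sq_div_sum hn hα hlam i).1
  have hSi : Integrable S μpi := by
    rw [hS]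
    exact integrable_finset_sum _ fun i _ => (coord_mean hα hlam i).1
  have hTval : ∫ x, T x ∂μpi = (n:ℝ) * (α * (α + 1) / (((n:ℝ) * α + 1) * lam)) := by
    rw [hT, integral_finset_sum _ fun i _ => (coord_sq_div_sum hn hα hlam i).1]
    rw [Finset.sum_congr rfl fun i _ => (coord_sq_div_sum hn hα hlam i).2,
      Finset.sum_const, Finset.card_univ, Fintype.card_fin, nsmul_eq_mul]
  have hSval : ∫ x, S x ∂μpi = (n:ℝ) * (α / lam) := by
    rw [hS, integral_finset_sum _ fun i _ => (coord_mean hα hlam i).1]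
    rw [Finset.sum_congr rfl fun i _ => (coord_mean hα hlam i).2,
      Finset.sum_const, Finset.card_univ, Fintype.card_fin, nsmul_eq_mul]
  rw [integral_const_mul, integral_sub (hTi.const_mul _) hSi, integral_const_mul, hTval, hSval]
  field_simp
  ring
end
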